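/- The general contraction rule c↓ is derivable in {ac↓, m, m∀, m∃, ≡}: for every context S[·] and every formula A there is a derivation from S[A∨A] to S[A] using only the rules ac↓, m, m∀, m∃, ≡. -/

import Mathlib

set_option linter.unusedVariables false

/-! ## First-order terms and formulas in negation normal form -/

/-- First-order terms: variables and function symbols are named by natural numbers.
(A function symbol together with the number of arguments it is applied to plays the
role of a symbol of fixed finite arity; there are countably many symbols of each arity.) -/
inductive Term : Type where
  | var : ℕ → Term
  | fn  : ℕ → List Term → Term

/-- The variable `x` occurs in the term. -/
inductive Term.HasVar : Term → ℕ → Prop where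
  | var (x : ℕ) : HasVar (.var x) x
  | fn {f : ℕ} {ts : List Term} {t : Term} {x : ℕ} :
      t ∈ ts → HasVar t x → HasVar (.fn f ts) x

/-- Simultaneous substitution on terms. -/
def Term.subst (σ : ℕ → Term) : Term → Term
  | .var x => σ x
  | .fn f ts => .fn f (ts.attach.map fun t => t.1.subst σ)
decreasing_by
  have := List.sizeOf_lt_of_mem t.2
  simp at *; omega

/-- Renaming of variables in a term. -/
def Term.rename (ρ : ℕ → ℕ) (t : Term) : Term := t.subst (fun x => .var (ρ x))

/-- Formulas in negation normal form: `pos p ts` is the atom `p(ts)` and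
`neg p ts` is the atom `p̄(ts)` built from the dual predicate symbol. -/
inductive Form : Type where
  | pos : ℕ → List Term → Form
  | neg : ℕ → List Term → Form
  | top : Form
  | bot : Form
  | and : Form → Form → Form
  | or  : Form → Form → Form
  | all : ℕ → Form → Form
  | ex  : ℕ → Form → Form

namespace Form

/-- Atoms: `⊤`, `⊥`, `p(ts)`, `p̄(ts)`. -/
def IsAtom : Form → Prop
  | pos _ _ => True
  | neg _ _ => True
  | top => True
  | bot => True
  | _ => False

/-- Negation, defined via De Morgan duality. -/
def negf : Form → Form
  | pos p ts => neg p ts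
  | neg p ts => pos p ts
  | top => bot
  | bot => top
  | and A B => or A.negf B.negf
  | or A B => and A.negf B.negf
  | all x A => ex x A.negf
  | ex x A => all x A.negf

/-- The variable `x` occurs free in the formula. -/
inductive FreeVar : Form → ℕ → Prop where
  | pos {p ts t x} : t ∈ ts → Term.HasVar t x → FreeVar (pos p ts) x
  | neg {p ts t x} : t ∈ ts → Term.HasVar t x → FreeVar (neg p ts) x
  | andl {A B x} : FreeVar A x → FreeVar (and A B) x
  | andr {A B x} : FreeVar B x → FreeVar (and A B) x
  | orl {A B x} : FreeVar A x → FreeVar (or A B) x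
  | orr {A B x} : FreeVar B x → FreeVar (or A B) x
  | all {A x y} : FreeVar A x → x ≠ y → FreeVar (all y A) x
  | ex {A x y} : FreeVar A x → x ≠ y → FreeVar (ex y A) x

/-- Substitution of the term `u` for all free occurrences of the variable `x`. -/
def subst1 (x : ℕ) (u : Term) : Form → Form
  | pos p ts => pos p (ts.map (Term.subst (fun y => if y = x then u else .var y)))
  | neg p ts => neg p (ts.map (Term.subst (fun y => if y = x then u else .var y)))
  | top => top
  | bot => bot
  | and A B => and (A.subst1 x u) (B.subst1 x u)
  | or A B => or (A.subst1 x u) (B.subst1 x u)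
  | all y A => if y = x then all y A else all y (A.subst1 x u)
  | ex y A => if y = x then ex y A else ex y (A.subst1 x u)

/-- Application of a variable renaming to a formula, renaming all occurrences
of variables (both free and bound). -/
def renameAll (ρ : ℕ → ℕ) : Form → Form
  | pos p ts => pos p (ts.map (Term.rename ρ))
  | neg p ts => neg p (ts.map (Term.rename ρ))
  | top => top
  | bot => bot
  | and A B => and (A.renameAll ρ) (B.renameAll ρ)
  | or A B => or (A.renameAll ρ) (B.renameAll ρ)
  | all y A => all (ρ y) (A.renameAll ρ)
  | ex y A => ex (ρ y) (A.renameAll ρ)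

/-- The formula contains no occurrence of `⊥`. -/
def BotFree : Form → Prop
  | bot => False
  | and A B => BotFree A ∧ BotFree B
  | or A B => BotFree A ∧ BotFree B
  | all _ A => BotFree A
  | ex _ A => BotFree A
  | _ => True

/-- Formula equivalence `≡`: the smallest congruence generated by commutativity and
associativity of `∧` and `∨`, commutation of like quantifiers, and the scope equations
`∀x.(A∨B) ≡ (∀x.A)∨B` and `∃x.(A∧B) ≡ (∃x.A)∧B` when `x` is not free in `B`. -/
inductive Equiv : Form → Form → Prop where
  | refl (A) : Equiv A A
  | symm {A B} : Equiv A B → Equiv B A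
  | trans {A B C} : Equiv A B → Equiv B C → Equiv A C
  | andCongr {A A' B B'} : Equiv A A' → Equiv B B' → Equiv (and A B) (and A' B')
  | orCongr {A A' B B'} : Equiv A A' → Equiv B B' → Equiv (or A B) (or A' B')
  | allCongr {A A'} (x) : Equiv A A' → Equiv (all x A) (all x A')
  | exCongr {A A'} (x) : Equiv A A' → Equiv (ex x A) (ex x A')
  | andComm (A B) : Equiv (and A B) (and B A)
  | orComm (A B) : Equiv (or A B) (or B A)
  | andAssoc (A B C) : Equiv (and (and A B) C) (and A (and B C))
  | orAssoc (A B C) : Equiv (or (or A B) C) (or A (or B C))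
  | allSwap (x y A) : Equiv (all x (all y A)) (all y (all x A))
  | exSwap (x y A) : Equiv (ex x (ex y A)) (ex y (ex x A))
  | allOr (x A B) (h : ¬ FreeVar B x) : Equiv (all x (or A B)) (or (all x A) B)
  | exAnd (x A B) (h : ¬ FreeVar B x) : Equiv (ex x (and A B)) (and (ex x A) B)

/-- The list of binding occurrences of variables in a formula. -/
def bvList : Form → List ℕ
  | and A B => A.bvList ++ B.bvList
  | or A B => A.bvList ++ B.bvList
  | all x A => x :: A.bvList
  | ex x A => x :: A.bvList
  | _ => []

/-- A formula is rectified if all bound variables are distinct from one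
another and from all free variables. -/
def Rectified (A : Form) : Prop :=
  A.bvList.Nodup ∧ ∀ x ∈ A.bvList, ¬ A.FreeVar x

/-- The variable `x` occurs (free or bound) in the formula. -/
def VarOccurs (A : Form) (x : ℕ) : Prop := A.FreeVar x ∨ x ∈ A.bvList

/-- The disjunction `⋁Γ` of the formulas of a sequent (written as a list);
by convention the empty disjunction is `⊥`. -/
def bigOr : List Form → Form
  | [] => bot
  | [A] => A
  | A :: B :: Γ => or A (bigOr (B :: Γ))

end Form

/-- α-conversion: renaming of bound variables. -/
inductive Alpha : Form → Form → Prop where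
  | refl (A) : Alpha A A
  | symm {A B} : Alpha A B → Alpha B A
  | trans {A B C} : Alpha A B → Alpha B C → Alpha A C
  | andCongr {A A' B B'} : Alpha A A' → Alpha B B' → Alpha (.and A B) (.and A' B')
  | orCongr {A A' B B'} : Alpha A A' → Alpha B B' → Alpha (.or A B) (.or A' B')
  | allCongr {A A'} (x) : Alpha A A' → Alpha (.all x A) (.all x A')
  | exCongr {A A'} (x) : Alpha A A' → Alpha (.ex x A) (.ex x A')
  | allRen (x y A) (h : ¬ A.VarOccurs y) :
      Alpha (.all x A) (.all y (A.subst1 x (.var y)))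
  | exRen (x y A) (h : ¬ A.VarOccurs y) :
      Alpha (.ex x A) (.ex y (A.subst1 x (.var y)))

/-- `B` is a rectification of `A`: a rectified form of `A` obtained by renaming
bound variables. -/
def IsRectification (B A : Form) : Prop := Alpha A B ∧ B.Rectified

/-! ## Deep inference -/

/-- A (positive) context: a formula with exactly one hole in atom position. -/
inductive Ctx : Type where
  | hole : Ctx
  | andL : Ctx → Form → Ctx
  | andR : Form → Ctx → Ctx
  | orL  : Ctx → Form → Ctx
  | orR  : Form → Ctx → Ctx
  | all  : ℕ → Ctx → Ctx
  | ex   : ℕ → Ctx → Ctx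

/-- `S.fill A` replaces the hole of `S` by `A`. -/
def Ctx.fill : Ctx → Form → Form
  | .hole, A => A
  | .andL S B, A => .and (S.fill A) B
  | .andR B S, A => .and B (S.fill A)
  | .orL S B, A => .or (S.fill A) B
  | .orR B S, A => .or B (S.fill A)
  | .all x S, A => .all x (S.fill A)
  | .ex x S, A => .ex x (S.fill A)

/-- The names of the deep inference rules. -/
inductive RuleName : Type where
  | allTop   -- ∀⊤
  | aiDown   -- ai↓
  | tDown    -- t↓
  | s        -- switch
  | mix      -- mix
  | exR      -- ∃
  | equivR   -- ≡
  | wDown    -- w↓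
  | m        -- medial
  | acDown   -- ac↓
  | mAll     -- m∀
  | mEx      -- m∃
  | wAll     -- w∀
  | cAll     -- c∀
  | cDown    -- general contraction c↓
  deriving DecidableEq

/-- Shallow instances of the deep inference rules: `Shallow r P Q` means that the
rule `r` rewrites the premise `P` into the conclusion `Q` (with the empty context). -/
inductive Shallow : RuleName → Form → Form → Prop where
  | allTop (x : ℕ) : Shallow .allTop .top (.all x .top)
  | aiDown (a : Form) (h : a.IsAtom) : Shallow .aiDown .top (.or a a.negf)
  | tDown (A : Form) : Shallow .tDown A (.and A .top)
  | s (A B C : Form) : Shallow .s (.and A (.or B C)) (.or (.and A B) C)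
  | mix (A B : Form) : Shallow .mix (.and A B) (.or A B)
  | exR (x : ℕ) (t : Term) (A : Form) : Shallow .exR (A.subst1 x t) (.ex x A)
  | equivR {A B : Form} (h : Form.Equiv A B) : Shallow .equivR B A
  | wDown (A B : Form) : Shallow .wDown A (.or A B)
  | m (A B C D : Form) :
      Shallow .m (.or (.and A C) (.and B D)) (.and (.or A B) (.or C D))
  | acDown (a : Form) (h : a.IsAtom) : Shallow .acDown (.or a a) a
  | mAll (x : ℕ) (A B : Form) :
      Shallow .mAll (.or (.all x A) (.all x B)) (.all x (.or A B))
  | mEx (x : ℕ) (A B : Form) :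
      Shallow .mEx (.or (.ex x A) (.ex x B)) (.ex x (.or A B))
  | wAll (x : ℕ) (A : Form) (h : ¬ A.FreeVar x) : Shallow .wAll A (.all x A)
  | cAll (x : ℕ) (A : Form) : Shallow .cAll (.all x (.all x A)) (.all x A)
  | cDown (A : Form) : Shallow .cDown (.or A A) A

/-- One deep inference step using a rule from `R`, applied inside a context. -/
def Step (R : Set RuleName) (A B : Form) : Prop :=
  ∃ r ∈ R, ∃ (S : Ctx) (P Q : Form), Shallow r P Q ∧ A = S.fill P ∧ B = S.fill Q

/-- `Deriv R A B`: there is a derivation from `A` to `B` using only rules from `R`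
(a finite sequence of deep inference steps rewriting `A` into `B`). -/
def Deriv (R : Set RuleName) : Form → Form → Prop :=
  Relation.ReflTransGen (Step R)

/-- A formula is provable in a system if there is a derivation from `⊤` to it. -/
def Provable (R : Set RuleName) (A : Form) : Prop := Deriv R .top A

/-- The linear system `MLS1X`. -/
def MLS1X : Set RuleName :=
  {RuleName.allTop, RuleName.aiDown, RuleName.tDown, RuleName.s, RuleName.mix,
   RuleName.exR, RuleName.equivR}

/-- The system `KS1`. -/
def KS1 : Set RuleName :=
  {RuleName.allTop, RuleName.aiDown, RuleName.tDown, RuleName.s, RuleName.mix,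
   RuleName.exR, RuleName.equivR, RuleName.wDown, RuleName.m, RuleName.acDown,
   RuleName.mAll, RuleName.mEx, RuleName.wAll, RuleName.cAll}

/-
Contraction is pushed through a formula by induction on its structure: medial distributes
it over `∧`, `m∀` and `m∃` over the quantifiers, and `≡` regroups `(A∨B)∨(A∨B)` into
`(A∨A)∨(B∨B)`, until only atomic contractions `ac↓` remain. Derivations can be performed
inside any context, which gives the deep rule.
-/

def Ctx.comp : Ctx → Ctx → Ctx
  | .hole, T => T
  | .andL S B, T => .andL (S.comp T) B
  | .andR B S, T => .andR B (S.comp T)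
  | .orL S B, T => .orL (S.comp T) B
  | .orR B S, T => .orR B (S.comp T)
  | .all x S, T => .all x (S.comp T)
  | .ex x S, T => .ex x (S.comp T)

theorem Ctx.fill_comp (S T : Ctx) (A : Form) :
    (S.comp T).fill A = S.fill (T.fill A) := by
  induction S <;> simp [Ctx.comp, Ctx.fill, *]

theorem Form.Equiv.or_left_comm (A B C : Form) :
    Equiv (.or A (.or B C)) (.or B (.or A C)) :=
  .trans (.symm (.orAssoc A B C)) <|
    .trans (.orCongr (.orComm A B) (.refl C)) (.orAssoc B A C)

theorem Form.Equiv.or_or_or_comm (A B C D : Form) :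
    Equiv (.or (.or A B) (.or C D)) (.or (.or A C) (.or B D)) :=
  .trans (.orAssoc A B (.or C D)) <|
    .trans (.orCongr (.refl A) (or_left_comm B C D)) (.symm (.orAssoc A C (.or B D)))

theorem Step.fill {R : Set RuleName} (S : Ctx) {A B : Form} (h : Step R A B) :
    Step R (S.fill A) (S.fill B) := by
  obtain ⟨r, hr, T, P, Q, hs, rfl, rfl⟩ := h
  exact ⟨r, hr, S.comp T, P, Q, hs, (Ctx.fill_comp ..).symm, (Ctx.fill_comp ..).symm⟩

namespace Deriv

variable {R : Set RuleName}

theorem fill (S : Ctx) {A B : Form} (h : Deriv R A B) :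
    Deriv R (S.fill A) (S.fill B) := by
  induction h with
  | refl => exact .refl
  | tail _ h ih => exact ih.tail (h.fill S)

theorem of_shallow {r : RuleName} (hr : r ∈ R) {P Q : Form} (h : Shallow r P Q) :
    Deriv R P Q :=
  .single ⟨r, hr, .hole, P, Q, h, rfl, rfl⟩

theorem and_congr {A A' B B' : Form} (hA : Deriv R A A') (hB : Deriv R B B') :
    Deriv R (.and A B) (.and A' B') :=
  (hA.fill (.andL .hole B)).trans (hB.fill (.andR A' .hole))

theorem or_congr {A A' B B' : Form} (hA : Deriv R A A') (hB : Deriv R B B') :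
    Deriv R (.or A B) (.or A' B') :=
  (hA.fill (.orL .hole B)).trans (hB.fill (.orR A' .hole))

theorem or_self
    (hR : {RuleName.acDown, RuleName.m, RuleName.mAll, RuleName.mEx, RuleName.equivR} ⊆ R)
    (A : Form) : Deriv R (.or A A) A := by
  have atom (a : Form) (ha : a.IsAtom) : Deriv R (.or a a) a :=
    of_shallow (hR (by simp)) (.acDown a ha)
  induction A with
  | pos | neg | top | bot => exact atom _ trivial
  | and A B ihA ihB =>
    exact (of_shallow (hR (by simp)) (.m A A B B)).trans (ihA.and_congr ihB)
  | or A B ihA ihB =>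
    exact (of_shallow (hR (by simp)) (.equivR (Form.Equiv.or_or_or_comm A A B B))).trans
      (ihA.or_congr ihB)
  | all x A ih => exact (of_shallow (hR (by simp)) (.mAll x A A)).trans (ih.fill (.all x .hole))
  | ex x A ih => exact (of_shallow (hR (by simp)) (.mEx x A A)).trans (ih.fill (.ex x .hole))

end Deriv

/-- The general contraction rule `c↓` is derivable in
`{ac↓, m, m∀, m∃, ≡}`. -/
theorem cDown_derivable (S : Ctx) (A : Form) :
    Deriv {RuleName.acDown, RuleName.m, RuleName.mAll, RuleName.mEx, RuleName.equivR}
      (S.fill (Form.or A A)) (S.fill A) :=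
  (Deriv.or_self subset_rfl A).fill S
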